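/- Assume 0 ≤ γ < t_m, and define the n×n block matrix C = (1/sqrt(t_m² − γ²))·[[iγ·1_m, t_m P_m], [t_m P_m, −iγ·1_m]]. Then C commutes with H (C H = H C) and C is an involution (C² = 1_n). -/

import Mathlib

/-!
Write `C = s⁻¹ (iγ F + t_m P)` with `s = √(t_m² - γ²)`, `F = diag(1_m, -1_m)` and `P` the
reversal matrix. Since `F² = P² = 1` and `PF = -FP`, we get `C² = s⁻² (t_m² - γ²) = 1`.

For the commutation, the symmetry hypotheses say `P H P = H̄`, and `H - H̄ = 2iγ E` where `E`
is `+1, -1` at the two middle diagonal sites; as `P² = 1` this gives `[P, H] = -2iγ E P`.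
The sign matrix `F` only sees the middle hopping `t_m` of the tridiagonal `H`, so
`[F, H] = 2 t_m E P`, and the two contributions cancel in `[iγ F + t_m P, H]`.
-/

open Matrix Complex

/-- The `2m × 2m` tridiagonal Hamiltonian with diagonal entries `z 1, …, z n`
(1-based) and symmetric off-diagonal entries `t 1, …, t (n-1)`. -/
noncomputable def Hop (m : ℕ) (t : ℕ → ℝ) (z : ℕ → ℂ) :
    Matrix (Fin (2*m)) (Fin (2*m)) ℂ :=
  fun i j =>
    if (i : ℕ) = (j : ℕ) then z ((i : ℕ) + 1)
    else if (i : ℕ) + 1 = (j : ℕ) then ((t ((i : ℕ) + 1) : ℝ) : ℂ)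
    else if (j : ℕ) + 1 = (i : ℕ) then ((t ((j : ℕ) + 1) : ℝ) : ℂ)
    else 0

/-- The block matrix `M(Z) = [[1, (conj Z / t_m) P_m],[(Z / t_m) P_m, 1]]`. -/
noncomputable def Mop (m : ℕ) (t : ℕ → ℝ) (Z : ℂ) :
    Matrix (Fin (2*m)) (Fin (2*m)) ℂ :=
  fun i j =>
    if i = j then 1
    else if (i : ℕ) + (j : ℕ) + 1 = 2*m then
      (if (i : ℕ) < m then (starRingEnd ℂ) Z / (t m : ℂ) else Z / (t m : ℂ))
    else 0

/-- The symmetry operator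
`C = (1/sqrt(t_m² − γ²))·[[iγ·1_m, t_m P_m],[t_m P_m, −iγ·1_m]]`. -/
noncomputable def Cop (m : ℕ) (t : ℕ → ℝ) (γ : ℝ) :
    Matrix (Fin (2*m)) (Fin (2*m)) ℂ :=
  fun i j =>
    if i = j then
      (if (i : ℕ) < m then Complex.I * (γ : ℂ) else -(Complex.I * (γ : ℂ))) /
        ((Real.sqrt ((t m)^2 - γ^2) : ℝ) : ℂ)
    else if (i : ℕ) + (j : ℕ) + 1 = 2*m then
      (t m : ℂ) / ((Real.sqrt ((t m)^2 - γ^2) : ℝ) : ℂ)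
    else 0

abbrev revMatrix (n : ℕ) (R : Type*) [Zero R] [One R] : Matrix (Fin n) (Fin n) R :=
  (Fin.revPerm : Equiv.Perm (Fin n)).permMatrix R

noncomputable def blockSign (m : ℕ) : Matrix (Fin (2*m)) (Fin (2*m)) ℂ :=
  diagonal fun i => if (i : ℕ) < m then 1 else -1

-- `E = diag(e_m - e_{m+1})` of the 1-based indexing, shifted to `Fin (2*m)`.
noncomputable def midSign (m : ℕ) : Matrix (Fin (2*m)) (Fin (2*m)) ℂ :=
  diagonal fun i => if (i : ℕ) + 1 = m then 1 else if (i : ℕ) = m then -1 else 0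

lemma revMatrix_apply_eq_ite {n : ℕ} {R : Type*} [Zero R] [One R] (i j : Fin n) :
    revMatrix n R i j = if (i : ℕ) + j + 1 = n then 1 else 0 := by
  simp only [revMatrix, PEquiv.toMatrix_apply, Equiv.toPEquiv_apply, Option.mem_def,
    Option.some.injEq, Fin.revPerm_apply, Fin.ext_iff, Fin.val_rev]
  congr 1
  apply propext
  omega

section revMatrix

variable {n : ℕ} {R : Type*} [NonAssocSemiring R]

lemma revMatrix_mul (A : Matrix (Fin n) (Fin n) R) :
    revMatrix n R * A = A.submatrix Fin.rev id :=
  PEquiv.toMatrix_toPEquiv_mul _ A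

lemma mul_revMatrix (A : Matrix (Fin n) (Fin n) R) :
    A * revMatrix n R = A.submatrix id Fin.rev :=
  PEquiv.mul_toMatrix_toPEquiv A _

lemma revMatrix_mul_revMatrix : revMatrix n R * revMatrix n R = 1 := by
  rw [revMatrix_mul]
  ext i j
  simp [Matrix.one_apply]

end revMatrix

lemma blockSign_mul_blockSign (m : ℕ) : blockSign m * blockSign m = 1 := by
  rw [blockSign, diagonal_mul_diagonal, ← diagonal_one]
  congr 1
  funext i
  split_ifs <;> norm_num

lemma revMatrix_mul_blockSign (m : ℕ) :
    revMatrix (2*m) ℂ * blockSign m = -(blockSign m * revMatrix (2*m) ℂ) := by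
  rw [revMatrix_mul, mul_revMatrix]
  ext i j
  have := i.isLt
  have := j.isLt
  simp only [blockSign, submatrix_apply, id, Matrix.neg_apply, diagonal_apply, Fin.ext_iff,
    Fin.val_rev]
  split_ifs <;> first | omega | norm_num

lemma mul_self_smul_add_smul_of_anticommute {𝕜 A : Type*} [CommRing 𝕜] [Ring A] [Algebra 𝕜 A]
    {P Q : A} (hP : P * P = 1) (hQ : Q * Q = 1) (hPQ : Q * P = -(P * Q)) (x y : 𝕜) :
    (x • P + y • Q) * (x • P + y • Q) = (x ^ 2 + y ^ 2) • 1 := by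
  simp only [add_mul, mul_add, smul_mul_smul_comm, hP, hQ, hPQ, smul_neg]
  rw [add_smul, mul_comm y x]
  abel_nf
  simp [pow_two]

lemma Cop_eq (m : ℕ) (t : ℕ → ℝ) (γ : ℝ) :
    Cop m t γ = ((√(t m ^ 2 - γ ^ 2) : ℝ) : ℂ)⁻¹ •
      ((I * γ) • blockSign m + (t m : ℂ) • revMatrix (2*m) ℂ) := by
  ext i j
  have := i.isLt
  rw [Cop, Matrix.smul_apply, Matrix.add_apply, Matrix.smul_apply, Matrix.smul_apply, blockSign,
    diagonal_apply, revMatrix_apply_eq_ite]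
  by_cases hij : i = j
  · subst hij
    have : ¬ (i : ℕ) + i + 1 = 2 * m := by omega
    simp only [if_true, if_neg this]
    split_ifs <;> simp [div_eq_inv_mul]
  · simp only [if_neg hij, smul_eq_mul]
    split_ifs <;> simp [div_eq_inv_mul]

lemma Cop_mul_self (m : ℕ) (t : ℕ → ℝ) {γ : ℝ} (hγ : γ ^ 2 < t m ^ 2) :
    Cop m t γ * Cop m t γ = 1 := by
  set s : ℂ := ((√(t m ^ 2 - γ ^ 2) : ℝ) : ℂ)
  have hs0 : s ≠ 0 := ofReal_ne_zero.mpr (Real.sqrt_pos.mpr (by linarith)).ne'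
  have hs_sq : s ^ 2 = (t m : ℂ) ^ 2 - (γ : ℂ) ^ 2 := by
    rw [← ofReal_pow, Real.sq_sqrt (by linarith)]
    push_cast; ring
  have hscalar : s⁻¹ * s⁻¹ * ((I * γ) ^ 2 + (t m : ℂ) ^ 2) = 1 := by
    field_simp
    rw [hs_sq, I_sq]
    ring
  rw [Cop_eq, smul_mul_smul_comm, mul_self_smul_add_smul_of_anticommute
    (blockSign_mul_blockSign m) revMatrix_mul_revMatrix (revMatrix_mul_blockSign m), smul_smul,
    hscalar, one_smul]

section Hop

variable (m : ℕ) (t : ℕ → ℝ) (z : ℕ → ℂ)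

lemma blockSign_lie_Hop :
    ⁅blockSign m, Hop m t z⁆ = (2 * t m : ℂ) • (midSign m * revMatrix (2*m) ℂ) := by
  ext i j
  have := i.isLt
  have := j.isLt
  simp only [Ring.lie_def, blockSign, midSign, Matrix.sub_apply, diagonal_mul, mul_diagonal,
    mul_revMatrix, submatrix_apply, id, diagonal_apply, Hop, Fin.ext_iff, Fin.val_rev,
    Matrix.smul_apply, smul_eq_mul]
  split_ifs <;> first
    | ring1
    | (exfalso; omega)
    | (rw [show (i : ℕ) + 1 = m by omega]; ring1)
    | (rw [show (j : ℕ) + 1 = m by omega]; ring1)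

lemma revMatrix_mul_Hop_mul_revMatrix
    (htsym : ∀ j, 1 ≤ j → j ≤ 2*m - 1 → t j = t (2*m - j))
    (hzsym : ∀ j, 1 ≤ j → j ≤ 2*m → z (2*m + 1 - j) = (starRingEnd ℂ) (z j)) :
    revMatrix (2*m) ℂ * Hop m t z * revMatrix (2*m) ℂ = (Hop m t z).map (starRingEnd ℂ) := by
  ext i j
  have := i.isLt
  have := j.isLt
  simp only [revMatrix_mul, mul_revMatrix, submatrix_apply, id, map_apply, Hop, Fin.val_rev]
  split_ifs <;> try simp only [conj_ofReal, map_zero]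
  all_goals first
    | rfl
    | (exfalso; omega)
    | (rw [← hzsym _ (by omega) (by omega)]; congr 1; omega)
    | (rw [htsym (i + 1) (by omega) (by omega)]; congr 2)
    | (rw [htsym (j + 1) (by omega) (by omega)]; congr 2)

lemma Hop_sub_map_conj (hm : 1 ≤ m)
    (hzreal : ∀ j, 1 ≤ j → j ≤ 2*m → j ≠ m → j ≠ m + 1 → (z j).im = 0)
    (hzsym : ∀ j, 1 ≤ j → j ≤ 2*m → z (2*m + 1 - j) = (starRingEnd ℂ) (z j)) :
    Hop m t z - (Hop m t z).map (starRingEnd ℂ) = (2 * I * (z m).im) • midSign m := by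
  have hzm : z (m + 1) = (starRingEnd ℂ) (z m) := by
    rw [← hzsym m hm (by omega)]; congr 1; omega
  ext i j
  have := i.isLt
  simp only [Matrix.sub_apply, map_apply, Hop, midSign, diagonal_apply, Fin.ext_iff,
    Matrix.smul_apply, smul_eq_mul]
  split_ifs <;> simp only [conj_ofReal, map_zero, sub_self, sub_conj, ofReal_mul, ofReal_ofNat] <;>
    first
    | ring1
    | (rw [show (i : ℕ) + 1 = m by omega]; ring1)
    | (rw [show (i : ℕ) + 1 = m + 1 by omega, hzm, conj_im]; push_cast; ring1)
    | (rw [hzreal _ (by omega) (by omega) (by omega) (by omega)]; simp)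

lemma revMatrix_lie_Hop (hm : 1 ≤ m)
    (htsym : ∀ j, 1 ≤ j → j ≤ 2*m - 1 → t j = t (2*m - j))
    (hzreal : ∀ j, 1 ≤ j → j ≤ 2*m → j ≠ m → j ≠ m + 1 → (z j).im = 0)
    (hzsym : ∀ j, 1 ≤ j → j ≤ 2*m → z (2*m + 1 - j) = (starRingEnd ℂ) (z j)) :
    ⁅revMatrix (2*m) ℂ, Hop m t z⁆ = -((2 * I * (z m).im) • (midSign m * revMatrix (2*m) ℂ)) := by
  set P := revMatrix (2*m) ℂ
  calc ⁅P, Hop m t z⁆ = (P * Hop m t z * P - Hop m t z) * P := by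
        rw [Ring.lie_def, sub_mul, mul_assoc _ P, revMatrix_mul_revMatrix, mul_one]
    _ = _ := by
        rw [revMatrix_mul_Hop_mul_revMatrix m t z htsym hzsym, ← neg_sub,
          Hop_sub_map_conj m t z hm hzreal hzsym, neg_mul, smul_mul_assoc]

lemma commute_Cop_Hop (hm : 1 ≤ m)
    (htsym : ∀ j, 1 ≤ j → j ≤ 2*m - 1 → t j = t (2*m - j))
    (hzreal : ∀ j, 1 ≤ j → j ≤ 2*m → j ≠ m → j ≠ m + 1 → (z j).im = 0)
    (hzsym : ∀ j, 1 ≤ j → j ≤ 2*m → z (2*m + 1 - j) = (starRingEnd ℂ) (z j)) :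
    Commute (Cop m t (z m).im) (Hop m t z) := by
  have hF := blockSign_lie_Hop m t z
  have hP := revMatrix_lie_Hop m t z hm htsym hzreal hzsym
  rw [Ring.lie_def, sub_eq_iff_eq_add] at hF hP
  rw [Commute, SemiconjBy, Cop_eq, smul_mul_assoc, add_mul, smul_mul_assoc, smul_mul_assoc, hF, hP,
    mul_smul_comm, mul_add, mul_smul_comm, mul_smul_comm]
  module

end Hop

theorem stmt5 (m : ℕ) (hm : 1 ≤ m) (t : ℕ → ℝ) (z : ℕ → ℂ)
    (htsym : ∀ j, 1 ≤ j → j ≤ 2*m - 1 → t j = t (2*m - j))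
    (hzreal : ∀ j, 1 ≤ j → j ≤ 2*m → j ≠ m → j ≠ m + 1 → (z j).im = 0)
    (hzsym : ∀ j, 1 ≤ j → j ≤ 2*m → z (2*m + 1 - j) = (starRingEnd ℂ) (z j))
    (hγ : 0 ≤ (z m).im)
    (hγlt : (z m).im < t m) :
    Cop m t ((z m).im) * Hop m t z = Hop m t z * Cop m t ((z m).im) ∧
      Cop m t ((z m).im) * Cop m t ((z m).im) = 1 :=
  ⟨(commute_Cop_Hop m t z hm htsym hzreal hzsym).eq, Cop_mul_self m t (by nlinarith)⟩
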